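/- Let a ∈ A and suppose d := |R⁺_a| is finite. Then the alternating word of length d in the letters i, j whose rightmost letter is i (i.e. (…, j, i, j, i) read left to right, ending with i), taken at a, has the same target and the same σ-composite as the alternating word of length d in i, j whose rightmost letter is j, taken at a. -/

import Mathlib

/-!
Let `N(w) = {β ∈ R⁺_a | w β ∈ -R⁺}` be the inversion set of a word `w` at `a`. Prepending a letter
`c` to `w` adds the root `w⁻¹ α_c` to `N(w)` whenever this root is positive. Now let the rank be
two and let `w = c' :: v`, where `c'` added the positive root `v⁻¹ α_{c'}`. Then `w⁻¹ α_{c'}` is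
negative. If `w⁻¹ α_c` were also negative for the other letter `c`, then `w⁻¹` would send `R⁺` to
`-R⁺`, which gives `N(w) = R⁺_a`. So every alternating word of length `k ≤ d = |R⁺_a|` has
`|N(w)| = k`. In particular, both alternating words `w, w'` of length `d` invert all of `R⁺_a`.

By axiom (7), the `⟨ij⟩`-orbit of `a` has a size that divides `d`, so both words have the same
target `b`. Therefore `u = w' w⁻¹` and `u⁻¹` map `R⁺_b` into itself. In the basis of simple roots,
this means both `u` and `u⁻¹` have nonnegative matrices, and `det u = (-1)^{2d} = 1`. A `2 × 2`
matrix that is nonnegative, has a nonnegative inverse and has positive determinant is diagonal. So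
`u` scales each simple root, and by axiom (4) it fixes each simple root.
-/

open Pointwise

variable {N : Type*} {A : Type*}

/-- The element `(i j)^m ▷ a` for the action of `F₂(N)` on `A`. -/
def altIter (act : N → A → A) (i j : N) (a : A) : ℕ → A
  | 0 => a
  | m + 1 => act i (act j (altIter act i j a m))

/-- The set `Θ(i,j;a)`. -/
def ThetaSet (act : N → A → A) (i j : N) (a : A) : Set A :=
  {x | ∃ m : ℕ, x = altIter act i j a m ∨ x = altIter act j i a m}

/-- The set of `ℕ₀`-linear combinations of elements of `s`. -/
def NSpan (s : Set (N →₀ ℝ)) : Set (N →₀ ℝ) :=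
  (AddSubmonoid.closure s : Set (N →₀ ℝ))

/-- A generalized root system: a transitive action of `F₂(N)` on `A` (axiom (1)),
roots `root a ⊆ ℝ^{(N)}` with simple roots `α n a` forming a basis (axiom (2)),
and maps `σ i a ∈ GL(ℝ^{(N)})`, satisfying axioms (3)-(7). -/
structure GRS (N : Type*) (A : Type*) where
  act : N → A → A
  act_invol : ∀ n a, act n (act n a) = a
  act_trans : ∀ a b : A, ∃ l : List N, l.foldr act a = b
  root : A → Set (N →₀ ℝ)
  α : N → A → N →₀ ℝ
  α_mem : ∀ n a, α n a ∈ root a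
  α_indep : ∀ a, LinearIndependent ℝ fun n => α n a
  α_span : ∀ a, Submodule.span ℝ (Set.range fun n => α n a) = ⊤
  σ : N → A → (N →₀ ℝ) ≃ₗ[ℝ] (N →₀ ℝ)
  ax3 : ∀ a, root a =
    root a ∩ NSpan (Set.range fun n => α n a) ∪ -(root a ∩ NSpan (Set.range fun n => α n a))
  ax4 : ∀ i a, (Set.range fun r : ℝ => r • α i a) ∩ root a = {α i a, -α i a}
  ax5_root : ∀ i a, ⇑(σ i a) '' root a = root (act i a)
  ax5_diag : ∀ i a, σ i a (α i a) = -α i (act i a)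
  ax5_off : ∀ i a j, j ≠ i →
    ∃ m : ℕ, σ i a (α j a) = α j (act i a) + (m : ℝ) • α i (act i a)
  ax6 : ∀ i a v, σ i (act i a) (σ i a v) = v
  ax7 : ∀ a (i j : N), i ≠ j →
    (root a ∩ {β | ∃ p q : ℕ, β = (p : ℝ) • α i a + (q : ℝ) • α j a}).Finite →
    (ThetaSet act i j a).Finite ∧
      (ThetaSet act i j a).ncard ∣
        (root a ∩ {β | ∃ p q : ℕ, β = (p : ℝ) • α i a + (q : ℝ) • α j a}).ncard

/-- The positive roots `R⁺_a`. -/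
def GRS.pos (G : GRS N A) (a : A) : Set (N →₀ ℝ) :=
  G.root a ∩ NSpan (Set.range fun n => G.α n a)

/-- The target `i₁ ⋯ i_m ▷ a` of the word `(i₁, …, i_m)` at `a`. -/
def GRS.target (G : GRS N A) (l : List N) (a : A) : A :=
  l.foldr G.act a

/-- The σ-composite `σ_{i₁,b₁} ∘ ⋯ ∘ σ_{i_m,b_m}` of the word `(i₁, …, i_m)` at `a`. -/
noncomputable def GRS.wmap (G : GRS N A) : List N → A → (N →₀ ℝ) ≃ₗ[ℝ] (N →₀ ℝ)
  | [], _ => LinearEquiv.refl ℝ _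
  | i :: l, a => (G.wmap l a).trans (G.σ i (G.target l a))

/-- The length `ℓ` of a word at `a`: the minimal length of a word at `a`
with the same target and the same σ-composite. -/
noncomputable def GRS.len (G : GRS N A) (l : List N) (a : A) : ℕ :=
  sInf {m | ∃ l' : List N, l'.length = m ∧
    G.target l' a = G.target l a ∧ G.wmap l' a = G.wmap l a}

/-- A word of length `m` at `a` is reduced if `ℓ = m`. -/
def GRS.Reduced (G : GRS N A) (l : List N) (a : A) : Prop :=
  G.len l a = l.length

/-- `m_{i,j;a} = |R_a ∩ (ℕ₀ α_{i,a} + ℕ₀ α_{j,a})|`. -/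
noncomputable def GRS.mij (G : GRS N A) (i j : N) (a : A) : ℕ :=
  (G.root a ∩ {β | ∃ p q : ℕ, β = (p : ℝ) • G.α i a + (q : ℝ) • G.α j a}).ncard

/-- The alternating word `(i₁, …, i_m)` with `i_k = i` for `k` odd (leftmost letter `i`). -/
def altList (i j : N) : ℕ → List N
  | 0 => []
  | m + 1 => i :: altList j i m

/-- The alternating word of length `m` in the letters `i,j` whose rightmost letter is `i`. -/
def altR (i j : N) : ℕ → List N
  | 0 => []
  | m + 1 => altR j i m ++ [i]

/-- `a_m = i_m ⋯ i_1 ▷ a` for the alternating sequence with `i_k = i` for odd `k`. -/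
def aIter (act : N → A → A) (i j : N) (a : A) : ℕ → A
  | 0 => a
  | m + 1 => act (if m % 2 = 0 then i else j) (aIter act i j a m)

/-- The set of real roots `R^{re}_a`. -/
def GRS.reroot (G : GRS N A) (a : A) : Set (N →₀ ℝ) :=
  {β | ∃ (b : A) (l : List N) (n : N), G.target l b = a ∧ β = G.wmap l b (G.α n b)}

/-- The word `C(i,j;a)`: alternating of length `m_{i,j;a} - 1` with leftmost letter `i`. -/
noncomputable def GRS.Cword (G : GRS N A) (i j : N) (a : A) : List N :=
  altList i j (G.mij i j a - 1)

lemma apply_nonneg_of_mem_NSpan {s : Set (N →₀ ℝ)} {φ : (N →₀ ℝ) →ₗ[ℝ] ℝ}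
    (hs : ∀ y ∈ s, 0 ≤ φ y) {x : N →₀ ℝ} (hx : x ∈ NSpan s) : 0 ≤ φ x := by
  induction hx using AddSubmonoid.closure_induction with
  | mem y hy => exact hs y hy
  | zero => simp
  | add y z _ _ hy hz => simpa using add_nonneg hy hz

lemma length_altR (i j : N) (d : ℕ) : (altR i j d).length = d := by
  induction d generalizing i j with
  | zero => rfl
  | succ d ih => simp [altR, ih]

lemma isChain_altR {i j : N} (hij : i ≠ j) (d : ℕ) : (altR i j d).IsChain (· ≠ ·) := by
  induction d generalizing i j with
  | zero => exact List.IsChain.nil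
  | succ d ih =>
    refine (ih hij.symm).append (List.IsChain.singleton i) fun x hx y hy => ?_
    cases d with
    | zero => simp [altR] at hx
    | succ d =>
      simp_all [altR]
      exact Ne.symm hij

lemma prod_map_altR {H : Type*} [Group H] (s : N → H) (hs : ∀ n, s n * s n = 1) (x y : N)
    (d : ℕ) : ((altR x y d).map s).prod = ((altR y x d).map s).prod * (s y * s x) ^ d := by
  induction d generalizing x y with
  | zero => simp [altR]
  | succ d ih =>
    have hsemi : SemiconjBy (s x) (s y * s x) (s x * s y) := (mul_assoc _ _ _).symm
    calc ((altR x y (d + 1)).map s).prod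
        = ((altR x y d).map s).prod * ((s x * s y) ^ d * s x) := by
          simp [altR, ih y x, mul_assoc]
      _ = ((altR x y d).map s).prod * (s y * s y) * s x * (s y * s x) ^ d := by
          rw [← (hsemi.pow_right d).eq, hs, mul_one, mul_assoc]
      _ = ((altR y x (d + 1)).map s).prod * (s y * s x) ^ (d + 1) := by
          simp [altR, pow_succ', mul_assoc]

lemma MulAction.mem_orbit_zpowers_iff {α β : Type*} [Group α] [MulAction α β] {g : α} {b x : β} :
    x ∈ MulAction.orbit (Subgroup.zpowers g) b ↔ ∃ k : ℤ, g ^ k • b = x := by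
  simp only [MulAction.mem_orbit_iff, Subgroup.exists_zpowers]
  rfl

lemma MulAction.ncard_orbit_zpowers {α β : Type*} [Group α] [MulAction α β] (g : α) (b : β) :
    (MulAction.orbit (Subgroup.zpowers g) b).ncard = Function.minimalPeriod (g • ·) b := by
  rw [← Nat.card_coe_set_eq, Nat.card_congr (MulAction.orbitZPowersEquiv g b), Nat.card_zmod]

lemma Matrix.det_eq_apply_of_forall_row_ne_eq_one {ι R : Type*} [Fintype ι] [DecidableEq ι]
    [CommRing R] {M : Matrix ι ι R} (c : ι) (hM : ∀ n ≠ c, M n = (1 : Matrix ι ι R) n) :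
    M.det = M c c := by
  have hrow : M c = ∑ k, M c k • (1 : Matrix ι ι R) k := by
    ext l
    simp [Matrix.one_apply]
  have hM1 : M = (1 : Matrix ι ι R).updateRow c (M c) := by
    ext n : 1
    by_cases hn : n = c
    · subst hn
      simp
    · rw [Matrix.updateRow_ne hn, hM n hn]
  conv_lhs => rw [hM1, hrow]
  rw [Matrix.det_updateRow_sum, Matrix.det_one, smul_eq_mul, mul_one]

lemma det_toMatrix_symm_mul_det_toMatrix {ι M M' : Type*} [Fintype ι] [DecidableEq ι]
    [AddCommGroup M] [Module ℝ M] [AddCommGroup M'] [Module ℝ M'] (b : Module.Basis ι ℝ M)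
    (b' : Module.Basis ι ℝ M') (e : M ≃ₗ[ℝ] M') :
    (LinearMap.toMatrix b' b e.symm.toLinearMap).det * (LinearMap.toMatrix b b' e.toLinearMap).det
      = 1 := by
  rw [← Matrix.det_mul, ← LinearMap.toMatrix_comp, LinearEquiv.symm_comp, LinearMap.toMatrix_id,
    Matrix.det_one]

lemma Matrix.isDiag_of_nonneg_of_mul_eq_one_of_det_pos {M M' : Matrix (Fin 2) (Fin 2) ℝ}
    (hM : ∀ k l, 0 ≤ M k l) (hM' : ∀ k l, 0 ≤ M' k l) (h : M * M' = 1) (hdet : 0 < M.det) :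
    M.IsDiag := by
  rw [Matrix.det_fin_two] at hdet
  have h00 := congrFun (congrFun h 0) 0
  have h01 := congrFun (congrFun h 0) 1
  have h10 := congrFun (congrFun h 1) 0
  have h11 := congrFun (congrFun h 1) 1
  simp only [Matrix.mul_apply, Fin.sum_univ_two, Matrix.one_apply_eq,
    Matrix.one_apply_ne zero_ne_one, Matrix.one_apply_ne one_ne_zero] at h00 h01 h10 h11
  -- The off-diagonal entries of `M * M'` are sums of nonnegative products, so each product
  -- vanishes; the diagonal of `M` is positive because `det M > 0`.
  have hM00 : 0 < M 0 0 := by nlinarith [hM 0 1, hM 1 0, hM 1 1]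
  have hM11 : 0 < M 1 1 := by nlinarith [hM 0 1, hM 1 0, hM 0 0]
  have hM'01 : M' 0 1 = 0 := by nlinarith [hM 0 1, hM' 0 1, hM' 1 1]
  have hM'10 : M' 1 0 = 0 := by nlinarith [hM 1 0, hM' 1 0, hM' 0 0]
  intro k l hkl
  fin_cases k <;> fin_cases l <;> simp at hkl ⊢
  · nlinarith [hM 0 1, hM' 1 1]
  · nlinarith [hM 1 0, hM' 0 0]

namespace GRS

variable (G : GRS N A)

noncomputable def basis (a : A) : Module.Basis N ℝ (N →₀ ℝ) :=
  Module.Basis.mk (G.α_indep a) (G.α_span a).ge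

@[simp]
lemma basis_apply (a : A) (n : N) : G.basis a n = G.α n a :=
  Module.Basis.mk_apply _ _ _

@[simp]
lemma basis_repr_α (a : A) (n : N) : (G.basis a).repr (G.α n a) = Finsupp.single n 1 := by
  rw [← basis_apply, Module.Basis.repr_self]

def perm (n : N) : Equiv.Perm A :=
  Function.Involutive.toPerm (G.act n) (G.act_invol n)

def inversions (w : List N) (a : A) : Set (N →₀ ℝ) :=
  {x ∈ G.pos a | -G.wmap w a x ∈ G.pos (G.target w a)}

-- When it is positive, this is the one root inverted by `c :: w` but not by `w`.
noncomputable def inversionRoot (c : N) (w : List N) (a : A) : N →₀ ℝ :=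
  (G.wmap w a).symm (G.α c (G.target w a))

variable {G}

section Roots

variable {a : A} {x : N →₀ ℝ}

lemma zero_notMem_root [Nonempty N] (a : A) : (0 : N →₀ ℝ) ∉ G.root a := by
  intro h0
  obtain ⟨n⟩ := ‹Nonempty N›
  have hline : (0 : N →₀ ℝ) ∈ (Set.range fun r : ℝ => r • G.α n a) ∩ G.root a :=
    ⟨⟨0, zero_smul ℝ _⟩, h0⟩
  rw [G.ax4 n a] at hline
  have hα : G.α n a ≠ 0 := (G.α_indep a).ne_zero n
  rcases hline with h | h
  · exact hα h.symm
  · exact hα (neg_eq_zero.1 h.symm)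

lemma mem_pos_or_neg_mem_pos (hx : x ∈ G.root a) : x ∈ G.pos a ∨ -x ∈ G.pos a := by
  rwa [G.ax3 a] at hx

lemma α_mem_pos (n : N) (a : A) : G.α n a ∈ G.pos a :=
  ⟨G.α_mem n a, AddSubmonoid.subset_closure ⟨n, rfl⟩⟩

lemma repr_nonneg_of_mem_pos (hx : x ∈ G.pos a) (n : N) : 0 ≤ (G.basis a).repr x n := by
  refine apply_nonneg_of_mem_NSpan (φ := Finsupp.lapply n ∘ₗ (G.basis a).repr.toLinearMap)
    ?_ hx.2
  rintro _ ⟨k, rfl⟩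
  simp only [LinearMap.comp_apply, LinearEquiv.coe_coe, basis_repr_α, Finsupp.lapply_apply]
  exact Finsupp.single_nonneg.2 zero_le_one n

lemma exists_repr_pos_of_mem_pos [Nonempty N] (hx : x ∈ G.pos a) :
    ∃ n, 0 < (G.basis a).repr x n := by
  by_contra! h
  have hx0 : x = 0 := (G.basis a).repr.injective <| by
    ext n
    simpa using le_antisymm (h n) (repr_nonneg_of_mem_pos hx n)
  exact zero_notMem_root a (hx0 ▸ hx.1)

lemma neg_notMem_pos_of_repr_pos {n : N} (hn : 0 < (G.basis a).repr x n) : -x ∉ G.pos a := by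
  intro h
  have := repr_nonneg_of_mem_pos h n
  simp only [map_neg, Finsupp.neg_apply, neg_nonneg] at this
  linarith

lemma neg_notMem_pos [Nonempty N] (hx : x ∈ G.pos a) : -x ∉ G.pos a :=
  let ⟨_, hn⟩ := exists_repr_pos_of_mem_pos hx
  neg_notMem_pos_of_repr_pos hn

lemma mem_pos_of_repr_pos (hx : x ∈ G.root a) {n : N} (hn : 0 < (G.basis a).repr x n) :
    x ∈ G.pos a :=
  (mem_pos_or_neg_mem_pos hx).resolve_right (neg_notMem_pos_of_repr_pos hn)

lemma eq_α_of_mem_pos {c : N} (hx : x ∈ G.pos a) (hc : ∀ n ≠ c, (G.basis a).repr x n = 0) :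
    x = G.α c a := by
  have : Nonempty N := ⟨c⟩
  have hline : x ∈ (Set.range fun r : ℝ => r • G.α c a) ∩ G.root a := by
    refine ⟨⟨(G.basis a).repr x c, (G.basis a).repr.injective ?_⟩, hx.1⟩
    ext n
    by_cases hn : n = c
    · subst hn
      simp
    · simp [hc n hn, Ne.symm hn]
  rw [G.ax4 c a] at hline
  refine hline.resolve_right fun h => neg_notMem_pos hx ?_
  rw [h, neg_neg]
  exact α_mem_pos c a

lemma pos_eq_root_inter {i j : N} (hN : ∀ n, n = i ∨ n = j) (a : A) :
    G.pos a = G.root a ∩ {β | ∃ p q : ℕ, β = (p : ℝ) • G.α i a + (q : ℝ) • G.α j a} := by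
  have hrange : Set.range (fun n => G.α n a) = {G.α i a, G.α j a} := by
    ext x
    constructor
    · rintro ⟨n, rfl⟩
      rcases hN n with rfl | rfl <;> simp
    · rintro (rfl | rfl) <;> exact ⟨_, rfl⟩
  ext x
  simp only [GRS.pos, NSpan, hrange, Set.mem_inter_iff, SetLike.mem_coe,
    AddSubmonoid.mem_closure_pair, Nat.cast_smul_eq_nsmul, Set.mem_ofPred_eq, eq_comm]

end Roots

section Reflections

variable {t : A} {x : N →₀ ℝ}

lemma σ_symm (c : N) (t : A) : (G.σ c t).symm = G.σ c (G.act c t) := by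
  refine LinearEquiv.ext fun y => ?_
  rw [LinearEquiv.symm_apply_eq]
  simpa [G.act_invol] using (G.ax6 c (G.act c t) y).symm

lemma σ_act_α (c : N) (t : A) : G.σ c (G.act c t) (G.α c (G.act c t)) = -G.α c t := by
  rw [G.ax5_diag, G.act_invol]

lemma σ_mem_root (c : N) (hx : x ∈ G.root t) : G.σ c t x ∈ G.root (G.act c t) :=
  G.ax5_root c t ▸ Set.mem_image_of_mem _ hx

lemma repr_σ_of_ne {c n : N} (hn : n ≠ c) (t : A) (x : N →₀ ℝ) :
    (G.basis (G.act c t)).repr (G.σ c t x) n = (G.basis t).repr x n := by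
  have key : Finsupp.lapply n ∘ₗ (G.basis (G.act c t)).repr.toLinearMap ∘ₗ (G.σ c t).toLinearMap =
      Finsupp.lapply n ∘ₗ (G.basis t).repr.toLinearMap := by
    refine (G.basis t).ext fun k => ?_
    by_cases hk : k = c
    · subst hk
      simp [G.ax5_diag, Ne.symm hn]
    · obtain ⟨m, hm⟩ := G.ax5_off c t k hk
      simp [hm, Ne.symm hn]
  exact LinearMap.congr_fun key x

lemma σ_mem_pos {c : N} (hx : x ∈ G.pos t) (hxc : x ≠ G.α c t) :
    G.σ c t x ∈ G.pos (G.act c t) := by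
  obtain ⟨n, hnc, hn⟩ : ∃ n ≠ c, (G.basis t).repr x n ≠ 0 := by
    by_contra! h
    exact hxc (eq_α_of_mem_pos hx h)
  refine mem_pos_of_repr_pos (σ_mem_root c hx.1) (n := n) ?_
  rw [repr_σ_of_ne hnc]
  exact (repr_nonneg_of_mem_pos hx n).lt_of_ne' hn

end Reflections

section Words

variable {w : List N} {a : A}

lemma target_cons (c : N) (w : List N) (a : A) :
    G.target (c :: w) a = G.act c (G.target w a) := rfl

lemma wmap_cons_apply (c : N) (w : List N) (a : A) (x : N →₀ ℝ) :
    G.wmap (c :: w) a x = G.σ c (G.target w a) (G.wmap w a x) := rfl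

lemma wmap_cons_symm_apply (c : N) (w : List N) (a : A) (y : N →₀ ℝ) :
    (G.wmap (c :: w) a).symm y = (G.wmap w a).symm ((G.σ c (G.target w a)).symm y) := rfl

lemma image_wmap_root (w : List N) (a : A) : G.wmap w a '' G.root a = G.root (G.target w a) := by
  induction w with
  | nil => exact Set.image_id _
  | cons c w ih =>
    rw [target_cons, ← G.ax5_root, ← ih, ← Set.image_comp]
    rfl

lemma wmap_mem_root {x : N →₀ ℝ} (hx : x ∈ G.root a) : G.wmap w a x ∈ G.root (G.target w a) :=
  image_wmap_root w a ▸ Set.mem_image_of_mem _ hx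

lemma wmap_symm_mem_root {y : N →₀ ℝ} (hy : y ∈ G.root (G.target w a)) :
    (G.wmap w a).symm y ∈ G.root a := by
  rwa [← image_wmap_root, LinearEquiv.image_eq_preimage_symm] at hy

lemma target_eq_prod (w : List N) (a : A) : G.target w a = (w.map G.perm).prod a := by
  induction w with
  | nil => rfl
  | cons c w ih =>
    rw [target_cons, ih]
    rfl

lemma perm_mul_self (n : N) : G.perm n * G.perm n = 1 :=
  Equiv.ext (G.act_invol n)

lemma altIter_eq_pow_apply (i j : N) (a : A) (m : ℕ) :
    altIter G.act i j a m = ((G.perm i * G.perm j) ^ m) a := by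
  induction m with
  | zero => rfl
  | succ m ih =>
    rw [pow_succ', Equiv.Perm.mul_apply, ← ih]
    rfl

lemma thetaSet_eq_orbit (i j : N) (a : A) :
    ThetaSet G.act i j a = MulAction.orbit (Subgroup.zpowers (G.perm j * G.perm i)) a := by
  have hinv : (G.perm j * G.perm i)⁻¹ = G.perm i * G.perm j := by
    rw [inv_eq_of_mul_eq_one_right]
    simp [← mul_assoc, mul_assoc (G.perm j), perm_mul_self]
  ext x
  simp only [ThetaSet, Set.mem_ofPred_eq, MulAction.mem_orbit_zpowers_iff, Equiv.Perm.smul_def,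
    altIter_eq_pow_apply]
  constructor
  · rintro ⟨m, rfl | rfl⟩
    · exact ⟨-m, by rw [zpow_neg, zpow_natCast, ← inv_pow, hinv]⟩
    · exact ⟨m, by rw [zpow_natCast]⟩
  · rintro ⟨k, rfl⟩
    obtain ⟨m, rfl | rfl⟩ := Int.eq_nat_or_neg k
    · exact ⟨m, Or.inr (by rw [zpow_natCast])⟩
    · exact ⟨m, Or.inl (by rw [zpow_neg, zpow_natCast, ← inv_pow, hinv])⟩

lemma target_altR_eq_of_dvd {i j : N} {a : A} {d : ℕ}
    (hd : Function.minimalPeriod ((G.perm j * G.perm i) • ·) a ∣ d) :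
    G.target (altR i j d) a = G.target (altR j i d) a := by
  have hfix := Function.isPeriodicPt_iff_minimalPeriod_dvd.2 hd
  rw [Function.IsPeriodicPt, Function.IsFixedPt, smul_iterate] at hfix
  rw [target_eq_prod, target_eq_prod, prod_map_altR _ perm_mul_self, Equiv.Perm.mul_apply]
  exact congrArg _ hfix

end Words

section Inversions

variable {w : List N} {a : A}

lemma inversionRoot_mem_root (c : N) (w : List N) (a : A) : G.inversionRoot c w a ∈ G.root a :=
  wmap_symm_mem_root (G.α_mem c _)

lemma inversionRoot_cons_self (c : N) (w : List N) (a : A) :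
    G.inversionRoot c (c :: w) a = -G.inversionRoot c w a := by
  rw [inversionRoot, wmap_cons_symm_apply, target_cons, σ_symm, σ_act_α, map_neg, inversionRoot]

lemma inversions_nil [Nonempty N] (a : A) : G.inversions [] a = ∅ :=
  Set.eq_empty_of_forall_notMem fun _ hx => neg_notMem_pos hx.1 hx.2

lemma inversionRoot_notMem_inversions [Nonempty N] (c : N) (w : List N) (a : A) :
    G.inversionRoot c w a ∉ G.inversions w a := by
  rintro ⟨-, h⟩
  rw [inversionRoot, LinearEquiv.apply_symm_apply] at h
  exact neg_notMem_pos (α_mem_pos c _) h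

lemma inversions_cons [Nonempty N] {c : N} (hβ : G.inversionRoot c w a ∈ G.pos a) :
    G.inversions (c :: w) a = insert (G.inversionRoot c w a) (G.inversions w a) := by
  ext x
  simp only [inversions, Set.mem_sep_iff, Set.mem_insert_iff, wmap_cons_apply, target_cons]
  constructor
  · rintro ⟨hx, hσ⟩
    rcases mem_pos_or_neg_mem_pos (wmap_mem_root (w := w) hx.1) with h | h
    · left
      by_contra hne
      refine neg_notMem_pos (σ_mem_pos h fun heq => hne ?_) hσ
      rw [inversionRoot, ← heq, LinearEquiv.symm_apply_apply]
    · exact Or.inr ⟨hx, h⟩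
  · rintro (rfl | ⟨hx, h⟩)
    · refine ⟨hβ, ?_⟩
      rw [inversionRoot, LinearEquiv.apply_symm_apply, G.ax5_diag, neg_neg]
      exact α_mem_pos c _
    · refine ⟨hx, ?_⟩
      rw [← map_neg]
      refine σ_mem_pos h fun heq => neg_notMem_pos hβ ?_
      rwa [inversionRoot, ← heq, map_neg, LinearEquiv.symm_apply_apply, neg_neg]

lemma ncard_inversions_cons [Nonempty N] (hfin : (G.pos a).Finite) {c : N}
    (hβ : G.inversionRoot c w a ∈ G.pos a) :
    (G.inversions (c :: w) a).ncard = (G.inversions w a).ncard + 1 := by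
  rw [inversions_cons hβ, Set.ncard_insert_of_notMem (inversionRoot_notMem_inversions c w a)
    (hfin.subset (Set.sep_subset _ _))]

lemma inversions_eq_pos_of_forall [Nonempty N]
    (h : ∀ n, -G.inversionRoot n w a ∈ G.pos a) : G.inversions w a = G.pos a := by
  refine Set.Subset.antisymm (Set.sep_subset _ _) fun x hx => ⟨hx, ?_⟩
  refine (mem_pos_or_neg_mem_pos (wmap_mem_root (w := w) hx.1)).resolve_left fun hy => ?_
  obtain ⟨n, hn⟩ := exists_repr_pos_of_mem_pos hx
  have hle : 0 ≤ -(G.basis a).repr ((G.wmap w a).symm (G.wmap w a x)) n := by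
    refine apply_nonneg_of_mem_NSpan
      (φ := -(Finsupp.lapply n ∘ₗ (G.basis a).repr.toLinearMap ∘ₗ (G.wmap w a).symm.toLinearMap))
      ?_ hy.2
    rintro _ ⟨k, rfl⟩
    simpa [inversionRoot] using repr_nonneg_of_mem_pos (h k) n
  rw [LinearEquiv.symm_apply_apply] at hle
  linarith

lemma inversionRoot_cons_mem_pos [Nonempty N] {c c' : N} (hN : ∀ n, n = c ∨ n = c')
    {v : List N} (hβ : G.inversionRoot c' v a ∈ G.pos a)
    (hne : G.inversions (c' :: v) a ≠ G.pos a) : G.inversionRoot c (c' :: v) a ∈ G.pos a := by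
  by_contra hc
  refine hne (inversions_eq_pos_of_forall fun n => ?_)
  rcases hN n with rfl | rfl
  · exact (mem_pos_or_neg_mem_pos (inversionRoot_mem_root n _ a)).resolve_left hc
  · rwa [inversionRoot_cons_self, neg_neg]

lemma ncard_inversions_of_isChain [Nonempty N] {i j : N} (hN : ∀ n, n = i ∨ n = j)
    (hfin : (G.pos a).Finite) (c : N) (v : List N) (hchain : (c :: v).IsChain (· ≠ ·))
    (hlen : v.length + 1 ≤ (G.pos a).ncard) :
    G.inversionRoot c v a ∈ G.pos a ∧ (G.inversions (c :: v) a).ncard = v.length + 1 := by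
  induction v generalizing c with
  | nil =>
    refine ⟨α_mem_pos c a, ?_⟩
    rw [ncard_inversions_cons hfin (α_mem_pos c a), inversions_nil, Set.ncard_empty]
    rfl
  | cons c' u ih =>
    rw [List.isChain_cons_cons] at hchain
    simp only [List.length_cons] at hlen
    have hcover : ∀ n, n = c ∨ n = c' := fun n => by
      rcases hN n with rfl | rfl <;> rcases hN c with rfl | rfl <;> rcases hN c' with rfl | rfl <;>
        simp_all
    obtain ⟨hβ', hcard⟩ := ih c' hchain.2 (by omega)
    have hβ := inversionRoot_cons_mem_pos hcover hβ' fun h => by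
      rw [h] at hcard
      omega
    exact ⟨hβ, by rw [ncard_inversions_cons hfin hβ, hcard, List.length_cons]⟩

lemma inversions_eq_pos_of_isChain [Nonempty N] {i j : N} (hN : ∀ n, n = i ∨ n = j)
    (hfin : (G.pos a).Finite) (hchain : w.IsChain (· ≠ ·)) (hlen : w.length = (G.pos a).ncard) :
    G.inversions w a = G.pos a := by
  refine Set.eq_of_subset_of_ncard_le (Set.sep_subset _ _) ?_ hfin
  cases w with
  | nil => simp [← hlen]
  | cons c v =>
    rw [(ncard_inversions_of_isChain hN hfin c v hchain hlen.le).2, ← hlen, List.length_cons]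

lemma neg_wmap_symm_mem_pos [Nonempty N] (hw : G.inversions w a = G.pos a) {y : N →₀ ℝ}
    (hy : y ∈ G.pos (G.target w a)) : -(G.wmap w a).symm y ∈ G.pos a := by
  refine (mem_pos_or_neg_mem_pos (wmap_symm_mem_root hy.1)).resolve_left fun hx => ?_
  have := (hw ▸ hx : _ ∈ G.inversions w a).2
  rw [LinearEquiv.apply_symm_apply] at this
  exact neg_notMem_pos hy this

lemma wmap_wmap_symm_mem_pos [Nonempty N] {w' : List N} {b : A} (hw : G.inversions w a = G.pos a)
    (hw' : G.inversions w' a = G.pos a) (ht : G.target w a = b) (ht' : G.target w' a = b)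
    {y : N →₀ ℝ} (hy : y ∈ G.pos b) : G.wmap w' a ((G.wmap w a).symm y) ∈ G.pos b := by
  subst ht
  have := (hw' ▸ neg_wmap_symm_mem_pos hw hy : _ ∈ G.inversions w' a).2
  rwa [map_neg, neg_neg, ht'] at this

end Inversions

section Determinants

variable [Fintype N] [DecidableEq N]

lemma det_toMatrix_σ (c : N) (t : A) :
    (LinearMap.toMatrix (G.basis t) (G.basis (G.act c t)) (G.σ c t).toLinearMap).det = -1 := by
  rw [Matrix.det_eq_apply_of_forall_row_ne_eq_one c fun n hn => ?_, LinearMap.toMatrix_apply]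
  · simp [G.ax5_diag]
  ext k
  rw [LinearMap.toMatrix_apply, LinearEquiv.coe_coe, repr_σ_of_ne hn, basis_apply, basis_repr_α,
    Matrix.one_apply, Finsupp.single_apply]
  simp only [eq_comm]

lemma det_toMatrix_wmap (w : List N) (a : A) :
    (LinearMap.toMatrix (G.basis a) (G.basis (G.target w a)) (G.wmap w a).toLinearMap).det =
      (-1) ^ w.length := by
  induction w with
  | nil => exact (congrArg Matrix.det (LinearMap.toMatrix_id _)).trans Matrix.det_one
  | cons c w ih =>
    rw [show (G.wmap (c :: w) a).toLinearMap =
        (G.σ c (G.target w a)).toLinearMap ∘ₗ (G.wmap w a).toLinearMap from rfl,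
      LinearMap.toMatrix_comp _ (G.basis (G.target w a)), Matrix.det_mul, target_cons,
      det_toMatrix_σ, ih, List.length_cons, pow_succ']

lemma det_toMatrix_symm_trans_wmap {w w' : List N} {a : A} (ht : G.target w a = G.target w' a)
    (hlen : w.length = w'.length) :
    (LinearMap.toMatrix (G.basis (G.target w' a)) (G.basis (G.target w' a))
      ((G.wmap w a).symm.trans (G.wmap w' a)).toLinearMap).det = 1 := by
  have hw := det_toMatrix_symm_mul_det_toMatrix (G.basis a) (G.basis (G.target w' a)) (G.wmap w a)
  rw [← ht, det_toMatrix_wmap, ht] at hw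
  rwa [LinearEquiv.coe_trans, LinearMap.toMatrix_comp _ (G.basis a), Matrix.det_mul,
    det_toMatrix_wmap, ← hlen, mul_comm]

lemma eq_refl_of_mapsTo_pos {i j : N} (hij : i ≠ j) (hN : ∀ n, n = i ∨ n = j) {b : A}
    (u : (N →₀ ℝ) ≃ₗ[ℝ] (N →₀ ℝ)) (hu : Set.MapsTo u (G.pos b) (G.pos b))
    (hu' : Set.MapsTo u.symm (G.pos b) (G.pos b))
    (hdet : 0 < (LinearMap.toMatrix (G.basis b) (G.basis b) u.toLinearMap).det) :
    u = LinearEquiv.refl ℝ _ := by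
  set M := LinearMap.toMatrix (G.basis b) (G.basis b) u.toLinearMap with hMdef
  set M' := LinearMap.toMatrix (G.basis b) (G.basis b) u.symm.toLinearMap with hM'def
  have hnonneg : ∀ {v : (N →₀ ℝ) ≃ₗ[ℝ] (N →₀ ℝ)}, Set.MapsTo v (G.pos b) (G.pos b) →
      ∀ k l, 0 ≤ LinearMap.toMatrix (G.basis b) (G.basis b) v.toLinearMap k l := fun hv k l => by
    rw [LinearMap.toMatrix_apply]
    exact repr_nonneg_of_mem_pos (hv (basis_apply G b l ▸ α_mem_pos l b)) k
  have hmul : M * M' = 1 := by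
    rw [hMdef, hM'def, ← LinearMap.toMatrix_comp, LinearEquiv.comp_symm, LinearMap.toMatrix_id]
  let e : Fin 2 ≃ N := Equiv.ofBijective ![i, j] ⟨fun k l hkl => by
    fin_cases k <;> fin_cases l <;> simp_all [eq_comm],
    fun n => (hN n).elim (fun h => ⟨0, h.symm⟩) fun h => ⟨1, h.symm⟩⟩
  have hdiag : M.IsDiag := by
    have := Matrix.isDiag_of_nonneg_of_mul_eq_one_of_det_pos (M := M.submatrix e e)
      (M' := M'.submatrix e e) (fun _ _ => hnonneg hu _ _) (fun _ _ => hnonneg hu' _ _)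
      (by rw [Matrix.submatrix_mul_equiv, hmul, Matrix.submatrix_one_equiv])
      (by rwa [Matrix.det_submatrix_equiv_self])
    simpa using this.submatrix e.symm.injective
  refine (G.basis b).ext' fun l => ?_
  rw [basis_apply, LinearEquiv.refl_apply]
  refine eq_α_of_mem_pos (hu (α_mem_pos l b)) fun n hn => ?_
  simpa [hMdef, LinearMap.toMatrix_apply] using hdiag hn

lemma wmap_eq_of_inversions_eq_pos [Nonempty N] {i j : N} (hij : i ≠ j)
    (hN : ∀ n, n = i ∨ n = j) {w w' : List N} {a : A} (hw : G.inversions w a = G.pos a)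
    (hw' : G.inversions w' a = G.pos a) (ht : G.target w a = G.target w' a)
    (hlen : w.length = w'.length) : G.wmap w a = G.wmap w' a := by
  have hu := eq_refl_of_mapsTo_pos hij hN ((G.wmap w a).symm.trans (G.wmap w' a))
    (fun _ hy => wmap_wmap_symm_mem_pos hw hw' ht rfl hy)
    (fun _ hy => wmap_wmap_symm_mem_pos hw' hw rfl ht hy)
    (by rw [det_toMatrix_symm_trans_wmap ht hlen]; exact one_pos)
  refine LinearEquiv.ext fun x => ?_
  simpa using (LinearEquiv.congr_fun hu (G.wmap w a x)).symm

end Determinants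

end GRS

theorem stmt7_general (G : GRS N A) (i j : N) (hij : i ≠ j)
    (hN : ∀ n : N, n = i ∨ n = j) (a : A) (hfin : (G.pos a).Finite) :
    G.target (altR i j (G.pos a).ncard) a = G.target (altR j i (G.pos a).ncard) a ∧
    G.wmap (altR i j (G.pos a).ncard) a = G.wmap (altR j i (G.pos a).ncard) a := by
  classical
  have : Nonempty N := ⟨i⟩
  have : Finite N := Finite.of_surjective ![i, j] fun n =>
    (hN n).elim (fun h => ⟨0, h.symm⟩) fun h => ⟨1, h.symm⟩
  have := Fintype.ofFinite N
  set d := (G.pos a).ncard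
  have htarget : G.target (altR i j d) a = G.target (altR j i d) a := by
    have hdvd := (G.ax7 a i j hij (G.pos_eq_root_inter hN a ▸ hfin)).2
    rw [← G.pos_eq_root_inter hN a, G.thetaSet_eq_orbit, MulAction.ncard_orbit_zpowers] at hdvd
    exact G.target_altR_eq_of_dvd hdvd
  have hinv : ∀ {k l : N}, k ≠ l → G.inversions (altR k l d) a = G.pos a := fun hkl =>
    G.inversions_eq_pos_of_isChain hN hfin (isChain_altR hkl d) (length_altR _ _ d)
  exact ⟨htarget, G.wmap_eq_of_inversions_eq_pos hij hN (hinv hij) (hinv hij.symm) htarget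
    (by rw [length_altR, length_altR])⟩

/-- (rank two, `d = |R⁺_a|` finite) the two alternating words of length `d`
at `a` (rightmost letter `i`, resp. `j`) have the same target and the same σ-composite. -/
theorem stmt7 [Nonempty A] (G : GRS N A) (i j : N) (hij : i ≠ j)
    (hN : ∀ n : N, n = i ∨ n = j) (a : A) (hfin : (G.pos a).Finite) :
    G.target (altR i j (G.pos a).ncard) a = G.target (altR j i (G.pos a).ncard) a ∧
    G.wmap (altR i j (G.pos a).ncard) a = G.wmap (altR j i (G.pos a).ncard) a :=
  stmt7_general G i j hij hN a hfin
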